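/- Let L be an m-dimensional 3-Lie algebra over an algebraically closed field of characteristic 0 with β(L) = m−2 and dim L¹ = 2. Then dim Z(L) = m−4. -/

import Mathlib

/-!
Adding the center to an abelian ideal gives again an abelian ideal, so the center lies in any
abelian ideal `I` of maximal dimension. If `I` has codimension two, with complement spanned by
`u` and `v`, then for `a ∈ I` the bracket `[a, y, w]` only sees the `span {u, v}`-components of
`y` and `w`, hence is a multiple of `[a, u, v]`; a bracket of three elements of `span {u, v}`
vanishes. Therefore `L¹ = ad(u, v) I` and `Z(L) = I ∩ ker ad(u, v)`, and rank–nullity for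
`ad(u, v)` on `I` gives `dim Z(L) + dim L¹ = dim I = m - 2`.
-/

open Module

/-- A 3-Lie algebra structure on a vector space `L` over `F`: a trilinear,
fully alternating bracket satisfying the fundamental (generalized Jacobi) identity. -/
structure ThreeLie (F : Type*) [Field F] (L : Type*) [AddCommGroup L] [Module F L] where
  br : L →ₗ[F] L →ₗ[F] L →ₗ[F] L
  alt₁₂ : ∀ x z : L, br x x z = 0
  alt₂₃ : ∀ x y : L, br x y y = 0
  fund : ∀ x₁ x₂ x₃ y₂ y₃ : L,
    br (br x₁ x₂ x₃) y₂ y₃ =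
      br (br x₁ y₂ y₃) x₂ x₃ + br x₁ (br x₂ y₂ y₃) x₃ + br x₁ x₂ (br x₃ y₂ y₃)

namespace ThreeLie

variable {F : Type*} [Field F] {L : Type*} [AddCommGroup L] [Module F L] (T : ThreeLie F L)

/-- `I` is an ideal: `[I, L, L] ⊆ I`. -/
def IsIdeal (I : Submodule F L) : Prop := ∀ a ∈ I, ∀ x y : L, T.br a x y ∈ I

/-- `I` is an abelian ideal: an ideal with `[I, I, L] = 0`. -/
def IsAbelianIdeal (I : Submodule F L) : Prop :=
  T.IsIdeal I ∧ ∀ a ∈ I, ∀ b ∈ I, ∀ x : L, T.br a b x = 0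

/-- `A` is an abelian subalgebra: `[A, A, A] = 0`. -/
def IsAbelianSubalgebra (A : Submodule F L) : Prop :=
  ∀ a ∈ A, ∀ b ∈ A, ∀ c ∈ A, T.br a b c = 0

/-- `I` is a hypo-abelian ideal: an ideal with `[I,I,I] = 0` but `[I,I,L] ≠ 0`. -/
def IsHypoAbelianIdeal (I : Submodule F L) : Prop :=
  T.IsIdeal I ∧ T.IsAbelianSubalgebra I ∧ ¬ (∀ a ∈ I, ∀ b ∈ I, ∀ x : L, T.br a b x = 0)

/-- The derived algebra `L¹ = [L, L, L]`. -/
def derived : Submodule F L := Submodule.span F {z | ∃ x y w : L, z = T.br x y w}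

/-- The center `Z(L)`. -/
def center : Submodule F L where
  carrier := {x | ∀ y z : L, T.br x y z = 0}
  add_mem' := by
    intro a b ha hb y z
    simp [map_add, LinearMap.add_apply, ha y z, hb y z]
  zero_mem' := by intro y z; simp
  smul_mem' := by
    intro c a ha y z
    simp [map_smul, LinearMap.smul_apply, ha y z]

/-- The lower central series. -/
def lcs : ℕ → Submodule F L
  | 0 => ⊤
  | n + 1 => Submodule.span F {z | ∃ a ∈ lcs n, ∃ x y : L, z = T.br a x y}

/-- Nilpotency. -/
def IsNilpotent : Prop := ∃ s : ℕ, T.lcs s = ⊥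

end ThreeLie

open Submodule

lemma Submodule.finrank_map_add_finrank_inf_ker {K V W : Type*} [Field K] [AddCommGroup V]
    [Module K V] [AddCommGroup W] [Module K W] [FiniteDimensional K V] (p : Submodule K V)
    (f : V →ₗ[K] W) : finrank K (p.map f) + finrank K ↥(p ⊓ LinearMap.ker f) = finrank K p := by
  rw [← (f.domRestrict p).finrank_range_add_finrank_ker, LinearMap.range_domRestrict,
    LinearMap.ker_domRestrict, ← finrank_map_subtype_eq, map_comap_subtype]

lemma Submodule.exists_sup_span_pair_eq_top {K V : Type*} [Field K] [AddCommGroup V] [Module K V]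
    [FiniteDimensional K V] (p : Submodule K V) (hp : finrank K p + 2 = finrank K V) :
    ∃ u v : V, p ⊔ span K {u, v} = ⊤ := by
  obtain ⟨q, hpq⟩ := p.exists_isCompl
  have hq : finrank K q = 2 := by
    have := finrank_add_eq_of_isCompl hpq
    omega
  let b := finBasisOfFinrankEq K q hq
  refine ⟨b 0, b 1, eq_top_iff.mpr (hpq.sup_eq_top ▸ sup_le_sup_left ?_ p)⟩
  intro w hw
  rw [mem_span_pair]
  refine ⟨b.repr ⟨w, hw⟩ 0, b.repr ⟨w, hw⟩ 1, ?_⟩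
  have hw' := congrArg Subtype.val (b.sum_repr ⟨w, hw⟩)
  rwa [Fin.sum_univ_two, coe_add, coe_smul, coe_smul] at hw'

namespace ThreeLie

variable {F : Type*} [Field F] {L : Type*} [AddCommGroup L] [Module F L] (T : ThreeLie F L)

lemma br_swap₁₂ (x y z : L) : T.br y x z = -T.br x y z := by
  have h := T.alt₁₂ (x + y) z
  simp only [map_add, LinearMap.add_apply, T.alt₁₂, zero_add, add_zero] at h
  exact eq_neg_of_add_eq_zero_left h

lemma br_swap₂₃ (x y z : L) : T.br x z y = -T.br x y z := by
  have h := T.alt₂₃ x (y + z)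
  simp only [map_add, LinearMap.add_apply, T.alt₂₃, zero_add, add_zero] at h
  exact eq_neg_of_add_eq_zero_left h

lemma br_smul_add_smul (a u v : L) (c d e f : F) :
    T.br a (c • u + d • v) (e • u + f • v) = (c * f - d * e) • T.br a u v := by
  simp only [map_add, map_smul, LinearMap.add_apply, LinearMap.smul_apply, T.alt₂₃,
    T.br_swap₂₃ a v u, smul_zero, smul_neg, add_zero, zero_add, smul_smul]
  module

lemma br_smul_add_smul_eq_zero (u v : L) (c d e f g h : F) :
    T.br (c • u + d • v) (e • u + f • v) (g • u + h • v) = 0 := by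
  rw [T.br_smul_add_smul]
  simp only [map_add, map_smul, LinearMap.add_apply, LinearMap.smul_apply, T.alt₁₂,
    T.br_swap₁₂ u v v, T.alt₂₃, neg_zero, smul_zero, add_zero]

def ad (u v : L) : L →ₗ[F] L := (T.br.flip u).flip v

@[simp] lemma ad_apply (u v x : L) : T.ad u v x = T.br x u v := rfl

lemma map_ad_le_derived (I : Submodule F L) (u v : L) : I.map (T.ad u v) ≤ T.derived := by
  rintro _ ⟨a, -, rfl⟩
  exact subset_span ⟨a, u, v, rfl⟩

lemma center_le_ker_ad (u v : L) : T.center ≤ LinearMap.ker (T.ad u v) :=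
  fun _ hx => hx u v

namespace IsAbelianIdeal

variable {T} {I : Submodule F L}

lemma br_eq_zero_of_mem₁₃ (hI : T.IsAbelianIdeal I) {a b : L} (ha : a ∈ I) (hb : b ∈ I)
    (x : L) : T.br a x b = 0 := by
  rw [T.br_swap₂₃, hI.2 a ha b hb x, neg_zero]

lemma center_sup (hI : T.IsAbelianIdeal I) : T.IsAbelianIdeal (T.center ⊔ I) := by
  constructor
  · intro a ha x y
    obtain ⟨z, hz, i, hi, rfl⟩ := mem_sup.mp ha
    rw [map_add, LinearMap.add_apply, LinearMap.add_apply, hz x y, zero_add]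
    exact mem_sup_right (hI.1 i hi x y)
  · intro a ha b hb x
    obtain ⟨z, hz, i, hi, rfl⟩ := mem_sup.mp ha
    obtain ⟨z', hz', i', hi', rfl⟩ := mem_sup.mp hb
    simp only [map_add, LinearMap.add_apply, hz z' x, hz i' x, T.br_swap₁₂ z' i x, hz' i x,
      hI.2 i hi i' hi' x, neg_zero, add_zero]

lemma center_le [FiniteDimensional F L] (hI : T.IsAbelianIdeal I)
    (hmax : ∀ J, T.IsAbelianIdeal J → finrank F J ≤ finrank F I) : T.center ≤ I := by
  have hI_eq : I = T.center ⊔ I :=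
    eq_of_le_of_finrank_le le_sup_right (hmax _ hI.center_sup)
  exact hI_eq ▸ le_sup_left

variable {u v : L}

lemma br_eq_smul_br (hI : T.IsAbelianIdeal I) (hIuv : I ⊔ span F {u, v} = ⊤) {a : L}
    (ha : a ∈ I) (y w : L) : ∃ c : F, T.br a y w = c • T.br a u v := by
  have hmem (z : L) : z ∈ I ⊔ span F {u, v} := hIuv ▸ mem_top
  obtain ⟨a₁, ha₁, q, hq, rfl⟩ := mem_sup.mp (hmem y)
  obtain ⟨a₂, ha₂, s, hs, rfl⟩ := mem_sup.mp (hmem w)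
  obtain ⟨c, d, rfl⟩ := mem_span_pair.mp hq
  obtain ⟨e, f, rfl⟩ := mem_span_pair.mp hs
  refine ⟨c * f - d * e, ?_⟩
  rw [← T.br_smul_add_smul]
  simp only [map_add, LinearMap.add_apply, hI.2 a ha a₁ ha₁, hI.br_eq_zero_of_mem₁₃ ha ha₂,
    zero_add]

lemma br_mem_map_ad (hI : T.IsAbelianIdeal I) (hIuv : I ⊔ span F {u, v} = ⊤) {a : L}
    (ha : a ∈ I) (y w : L) : T.br a y w ∈ I.map (T.ad u v) := by
  obtain ⟨c, hc⟩ := hI.br_eq_smul_br hIuv ha y w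
  exact hc ▸ smul_mem _ c (mem_map_of_mem ha)

lemma derived_eq_map_ad (hI : T.IsAbelianIdeal I) (hIuv : I ⊔ span F {u, v} = ⊤) :
    T.derived = I.map (T.ad u v) := by
  refine le_antisymm (span_le.mpr ?_) (T.map_ad_le_derived I u v)
  rintro _ ⟨x, y, w, rfl⟩
  have hmem (z : L) : z ∈ I ⊔ span F {u, v} := hIuv ▸ mem_top
  obtain ⟨a, ha, q, hq, rfl⟩ := mem_sup.mp (hmem x)
  obtain ⟨a₁, ha₁, r, hr, rfl⟩ := mem_sup.mp (hmem y)
  obtain ⟨a₂, ha₂, s, hs, rfl⟩ := mem_sup.mp (hmem w)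
  have hqrs : T.br q r s = 0 := by
    obtain ⟨c, d, rfl⟩ := mem_span_pair.mp hq
    obtain ⟨e, f, rfl⟩ := mem_span_pair.mp hr
    obtain ⟨g, h, rfl⟩ := mem_span_pair.mp hs
    exact T.br_smul_add_smul_eq_zero u v c d e f g h
  have hexpand : T.br (a + q) (a₁ + r) (a₂ + s) =
      T.br a (a₁ + r) (a₂ + s) + T.br q a₁ (a₂ + s) + T.br q r a₂ + T.br q r s := by
    simp only [map_add, LinearMap.add_apply]
    abel
  rw [hexpand, hqrs, add_zero, T.br_swap₁₂ a₁ q, T.br_swap₂₃ q a₂ r, T.br_swap₁₂ a₂ q, neg_neg]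
  have hmap {b : L} (hb : b ∈ I) (y w : L) := hI.br_mem_map_ad hIuv hb y w
  exact add_mem (add_mem (hmap ha _ _) (neg_mem (hmap ha₁ _ _))) (hmap ha₂ _ _)

lemma center_eq_inf_ker_ad (hI : T.IsAbelianIdeal I) (hIuv : I ⊔ span F {u, v} = ⊤)
    (hZI : T.center ≤ I) : T.center = I ⊓ LinearMap.ker (T.ad u v) := by
  refine le_antisymm (le_inf hZI (T.center_le_ker_ad u v)) ?_
  rintro a ⟨ha, hker⟩ y w
  obtain ⟨c, hc⟩ := hI.br_eq_smul_br hIuv ha y w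
  rw [hc, ← T.ad_apply, LinearMap.mem_ker.mp hker, smul_zero]

lemma finrank_center_add_finrank_derived [FiniteDimensional F L] (hI : T.IsAbelianIdeal I)
    (hIuv : I ⊔ span F {u, v} = ⊤) (hZI : T.center ≤ I) :
    finrank F T.center + finrank F T.derived = finrank F I := by
  rw [hI.center_eq_inf_ker_ad hIuv hZI, hI.derived_eq_map_ad hIuv, add_comm]
  exact I.finrank_map_add_finrank_inf_ker _

end IsAbelianIdeal

end ThreeLie

theorem center_dim_of_beta_codim_two_derived_two_general {F : Type*} [Field F]
    {L : Type*} [AddCommGroup L] [Module F L] [FiniteDimensional F L]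
    (T : ThreeLie F L) (m : ℕ) (hdim : finrank F L = m)
    (hβ₁ : ∃ I : Submodule F L, T.IsAbelianIdeal I ∧ finrank F I + 2 = m)
    (hβ₂ : ∀ I : Submodule F L, T.IsAbelianIdeal I → finrank F I + 2 ≤ m)
    (hd2 : finrank F T.derived = 2) :
    finrank F T.center + 4 = m := by
  obtain ⟨I, hI, hIm⟩ := hβ₁
  have hZI : T.center ≤ I := hI.center_le fun J hJ => by have := hβ₂ J hJ; omega
  obtain ⟨u, v, hIuv⟩ := I.exists_sup_span_pair_eq_top (by omega)
  have := hI.finrank_center_add_finrank_derived hIuv hZI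
  omega

/-- an `m`-dimensional 3-Lie algebra over an algebraically closed field of
characteristic 0 with `β(L) = m−2` and `dim L¹ = 2` has `dim Z(L) = m−4`. -/
theorem center_dim_of_beta_codim_two_derived_two {F : Type*} [Field F] [IsAlgClosed F]
    [CharZero F] {L : Type*} [AddCommGroup L] [Module F L] [FiniteDimensional F L]
    (T : ThreeLie F L) (m : ℕ) (hdim : finrank F L = m)
    (hβ₁ : ∃ I : Submodule F L, T.IsAbelianIdeal I ∧ finrank F I + 2 = m)
    (hβ₂ : ∀ I : Submodule F L, T.IsAbelianIdeal I → finrank F I + 2 ≤ m)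
    (hd2 : finrank F T.derived = 2) :
    finrank F T.center + 4 = m :=
  center_dim_of_beta_codim_two_derived_two_general T m hdim hβ₁ hβ₂ hd2
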